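/- The two-sided Jacobi–Davidson right correction equation (I - q p^H)(A - θ I)(I - q p^H) s = -r_q, subject to the constraint p^H s = 0, has exactly one solution s if and only if p^H (A - θ I)^{-1} q ≠ 0; and it has no solution if and only if p^H (A - θ I)^{-1} q = 0. -/

import Mathlib

/-!
With `B = A - θ I` and `P = I - q pᴴ`, the choice of `θ` as the Rayleigh quotient makes the
residual `B q` orthogonal to `p`. Under the constraint `pᴴ s = 0` we have `P s = s`, and
`P (B s) = -B q` says exactly that `B s + B q` is a multiple of `q`; so the solutions are among
the vectors `s = α B⁻¹ q - q`, and the constraint on such an `s` reads `α · pᴴ B⁻¹ q = 1`. This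
has exactly one solution `α` when `pᴴ B⁻¹ q ≠ 0` and none otherwise.
-/

open Matrix

theorem existsUnique_iff_and_not_exists_iff {α : Type*} {P : α → Prop} {Q : Prop} {x : α}
    (h : ∀ s, P s ↔ Q ∧ s = x) : ((∃! s, P s) ↔ Q) ∧ ((¬ ∃ s, P s) ↔ ¬ Q) := by
  simp only [h]
  by_cases hQ : Q <;> simp [hQ]

theorem Matrix.eq_apply_zero_smul_one {R : Type*} [Semiring R] (M : Matrix (Fin 1) (Fin 1) R) :
    M = M 0 0 • (1 : Matrix (Fin 1) (Fin 1) R) := by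
  ext i j
  fin_cases i; fin_cases j
  simp

theorem Matrix.mul_fin_one_eq_smul {R ι : Type*} [CommSemiring R] (x : Matrix ι (Fin 1) R)
    (M : Matrix (Fin 1) (Fin 1) R) : x * M = M 0 0 • x := by
  rw [M.eq_apply_zero_smul_one, Matrix.mul_smul, Matrix.mul_one]
  simp

section ObliqueProjection

variable {R ι : Type*} [CommRing R] [Fintype ι] [DecidableEq ι]
variable {w : Matrix (Fin 1) ι R} {q : Matrix ι (Fin 1) R}

theorem one_sub_mul_mul_eq_sub_smul (x : Matrix ι (Fin 1) R) :
    (1 - q * w) * x = x - (w * x) 0 0 • q := by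
  rw [Matrix.sub_mul, Matrix.one_mul, Matrix.mul_assoc, mul_fin_one_eq_smul]

theorem one_sub_mul_mul_eq_self_of_mul_eq_zero {x : Matrix ι (Fin 1) R} (hx : w * x = 0) :
    (1 - q * w) * x = x := by
  rw [Matrix.sub_mul, Matrix.one_mul, Matrix.mul_assoc, hx, Matrix.mul_zero, sub_zero]

theorem mul_sub_smul_one_mul_eq_zero (A : Matrix ι ι R) (hwq : w * q = 1) :
    w * ((A - (w * A * q) 0 0 • 1) * q) = 0 := by
  rw [Matrix.sub_mul, Matrix.mul_sub, Matrix.smul_mul, Matrix.one_mul, Matrix.mul_smul, hwq,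
    ← Matrix.mul_assoc, ← eq_apply_zero_smul_one, sub_self]

end ObliqueProjection

section CorrectionEquation

variable {K ι : Type*} [Field K] [Fintype ι] [DecidableEq ι]
variable {B : Matrix ι ι K} {w : Matrix (Fin 1) ι K} {q : Matrix ι (Fin 1) K}

theorem correction_eq_iff_exists_smul (hB : IsUnit B.det) (hwq : w * q = 1)
    (hwBq : w * (B * q) = 0) {s : Matrix ι (Fin 1) K} (hs : w * s = 0) :
    (1 - q * w) * B * (1 - q * w) * s = -(B * q) ↔ ∃ α : K, s = α • (B⁻¹ * q) - q := by
  rw [Matrix.mul_assoc, one_sub_mul_mul_eq_self_of_mul_eq_zero hs, Matrix.mul_assoc,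
    one_sub_mul_mul_eq_sub_smul]
  constructor
  · intro h
    set α := (w * (B * s)) 0 0
    have hBs : B * s = α • q - B * q := by linear_combination (norm := abel) h
    refine ⟨α, ?_⟩
    rw [← nonsing_inv_mul_cancel_left B s hB, hBs, Matrix.mul_sub, Matrix.mul_smul,
      nonsing_inv_mul_cancel_left B q hB]
  · rintro ⟨α, rfl⟩
    rw [Matrix.mul_sub, Matrix.mul_smul, mul_nonsing_inv_cancel_left B q hB, Matrix.mul_sub,
      Matrix.mul_smul, hwq, hwBq, sub_zero]
    simp

theorem mul_smul_inv_mul_sub_eq_zero_iff (hwq : w * q = 1) (α : K) :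
    w * (α • (B⁻¹ * q) - q) = 0 ↔ α * (w * B⁻¹ * q) 0 0 = 1 := by
  set β := (w * B⁻¹ * q) 0 0
  have hβ : w * B⁻¹ * q = β • 1 := eq_apply_zero_smul_one _
  rw [Matrix.mul_sub, Matrix.mul_smul, ← Matrix.mul_assoc, hβ, smul_smul, hwq, sub_eq_zero]
  constructor
  · intro h
    simpa using congrFun (congrFun h 0) 0
  · intro h
    rw [h, one_smul]

theorem correction_system_iff (hB : IsUnit B.det) (hwq : w * q = 1) (hwBq : w * (B * q) = 0)
    (s : Matrix ι (Fin 1) K) :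
    (w * s = 0 ∧ (1 - q * w) * B * (1 - q * w) * s = -(B * q)) ↔
      (w * B⁻¹ * q) 0 0 ≠ 0 ∧ s = ((w * B⁻¹ * q) 0 0)⁻¹ • (B⁻¹ * q) - q := by
  constructor
  · rintro ⟨hs, h⟩
    obtain ⟨α, rfl⟩ := (correction_eq_iff_exists_smul hB hwq hwBq hs).mp h
    have hα := (mul_smul_inv_mul_sub_eq_zero_iff hwq α).mp hs
    exact ⟨right_ne_zero_of_mul_eq_one hα, by rw [eq_inv_of_mul_eq_one_left hα]⟩
  · rintro ⟨hβ, rfl⟩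
    have hs := (mul_smul_inv_mul_sub_eq_zero_iff hwq _).mpr (inv_mul_cancel₀ hβ)
    exact ⟨hs, (correction_eq_iff_exists_smul hB hwq hwBq hs).mpr ⟨_, rfl⟩⟩

end CorrectionEquation

/-- The two-sided Jacobi–Davidson right correction equation
`(I - q pᴴ)(A - θ I)(I - q pᴴ) s = -r_q`, subject to `pᴴ s = 0`,
has exactly one solution iff `pᴴ (A - θ I)⁻¹ q ≠ 0`, and has no solution iff
`pᴴ (A - θ I)⁻¹ q = 0`. -/
theorem two_sided_jd_right_correction
    {n : ℕ} (A : Matrix (Fin n) (Fin n) ℂ)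
    (p q : Matrix (Fin n) (Fin 1) ℂ)
    (hpq : pᴴ * q = 1)
    (θ : ℂ) (hθ : θ = (pᴴ * A * q) 0 0)
    (hA : IsUnit (A - θ • (1 : Matrix (Fin n) (Fin n) ℂ)))
    (rq : Matrix (Fin n) (Fin 1) ℂ)
    (hrq : rq = (A - θ • 1) * q) :
    ((∃! s : Matrix (Fin n) (Fin 1) ℂ,
        pᴴ * s = 0 ∧
          (1 - q * pᴴ) * (A - θ • 1) * (1 - q * pᴴ) * s = -rq) ↔
      (pᴴ * (A - θ • (1 : Matrix (Fin n) (Fin n) ℂ))⁻¹ * q) 0 0 ≠ 0) ∧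
    ((¬ ∃ s : Matrix (Fin n) (Fin 1) ℂ,
        pᴴ * s = 0 ∧
          (1 - q * pᴴ) * (A - θ • 1) * (1 - q * pᴴ) * s = -rq) ↔
      (pᴴ * (A - θ • (1 : Matrix (Fin n) (Fin n) ℂ))⁻¹ * q) 0 0 = 0) := by
  have hresidual : pᴴ * ((A - θ • 1) * q) = 0 := hθ ▸ mul_sub_smul_one_mul_eq_zero A hpq
  have hdet := (isUnit_iff_isUnit_det _).mp hA
  subst hrq
  simpa only [not_not] using
    existsUnique_iff_and_not_exists_iff (correction_system_iff hdet hpq hresidual)
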